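/- arXiv:1206.2531 — 4 statements merged into one kernel-verified Lean document; each statement's English description precedes it below -/
import Mathlib

section
/- Let C be an invertible l×l matrix over ℚ, n a natural number, Φ := (-1)^n · Cᵀ · C⁻¹, and define the quadratic form q(x) := xᵀ · (C⁻¹)ᵀ · x. Then for every integer m (positive or negative) and every x ∈ ℚ^l, q(Φ^m x) = q(x). In particular, Φ maps roots (vectors with q(x) = 1) bijectively onto roots. -/
/-!
Expanding `Φᵀ (C⁻¹)ᵀ Φ`, the sign squares away and `C (C⁻¹)ᵀ Cᵀ = C`, leaving `(C⁻¹)ᵀ`: so `Φ`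
lies in the isometry group of the Euler form. Being a group, it contains every `Φ ^ m`, and `Φ`
permutes each level set of `q`, with inverse `Φ⁻¹`.
-/

open Matrix

namespace Matrix

variable {ι R : Type*} [Fintype ι]

theorem mulVec_dotProduct_mulVec_mulVec [CommSemiring R] (M A : Matrix ι ι R) (x : ι → R) :
    (M *ᵥ x) ⬝ᵥ (A *ᵥ (M *ᵥ x)) = x ⬝ᵥ ((Mᵀ * A * M) *ᵥ x) := by
  simp only [← mulVec_mulVec, dotProduct_mulVec, vecMul_transpose]

variable [DecidableEq ι]

/-- The isometry group of the bilinear form `(x, y) ↦ x ⬝ᵥ (A *ᵥ y)`. -/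
def isometryGroup [CommSemiring R] (A : Matrix ι ι R) : Subgroup (Matrix ι ι R)ˣ where
  carrier := {U | (U : Matrix ι ι R)ᵀ * A * U = A}
  one_mem' := by simp
  mul_mem' {U V} hU hV := by
    simp only [Set.mem_ofPred_eq, Units.val_mul, transpose_mul] at hU hV ⊢
    calc (V : Matrix ι ι R)ᵀ * (U : Matrix ι ι R)ᵀ * A * (U * V)
        = (V : Matrix ι ι R)ᵀ * ((U : Matrix ι ι R)ᵀ * A * U) * V := by
          simp only [Matrix.mul_assoc]
      _ = A := by rw [hU, hV]
  inv_mem' {U} hU := by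
    simp only [Set.mem_ofPred_eq] at hU ⊢
    calc ((U⁻¹ : (Matrix ι ι R)ˣ) : Matrix ι ι R)ᵀ * A * ↑U⁻¹
        = ((U⁻¹ : (Matrix ι ι R)ˣ) : Matrix ι ι R)ᵀ * ((U : Matrix ι ι R)ᵀ * A * U) * ↑U⁻¹ := by
          rw [hU]
      _ = ((U : Matrix ι ι R) * ↑U⁻¹)ᵀ * A * ((U : Matrix ι ι R) * ↑U⁻¹) := by
          simp only [transpose_mul, Matrix.mul_assoc]
      _ = A := by rw [Units.mul_inv, transpose_one, Matrix.one_mul, Matrix.mul_one]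

theorem mem_isometryGroup [CommSemiring R] {A : Matrix ι ι R} {U : (Matrix ι ι R)ˣ} :
    U ∈ isometryGroup A ↔ (U : Matrix ι ι R)ᵀ * A * U = A :=
  Iff.rfl

theorem quadForm_mulVec_of_mem_isometryGroup [CommSemiring R] {A : Matrix ι ι R}
    {U : (Matrix ι ι R)ˣ} (hU : U ∈ isometryGroup A) (x : ι → R) :
    ((U : Matrix ι ι R) *ᵥ x) ⬝ᵥ (A *ᵥ ((U : Matrix ι ι R) *ᵥ x)) = x ⬝ᵥ (A *ᵥ x) := by
  rw [mulVec_dotProduct_mulVec_mulVec, mem_isometryGroup.mp hU]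

theorem bijOn_quadForm_levelSet_of_mem_isometryGroup [CommSemiring R] {A : Matrix ι ι R}
    {U : (Matrix ι ι R)ˣ} (hU : U ∈ isometryGroup A) (c : R) :
    Set.BijOn ((U : Matrix ι ι R) *ᵥ ·) {x | x ⬝ᵥ (A *ᵥ x) = c} {x | x ⬝ᵥ (A *ᵥ x) = c} := by
  have mapsTo {V : (Matrix ι ι R)ˣ} (hV : V ∈ isometryGroup A) :
      Set.MapsTo ((V : Matrix ι ι R) *ᵥ ·) {x | x ⬝ᵥ (A *ᵥ x) = c} {x | x ⬝ᵥ (A *ᵥ x) = c} :=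
    fun x hx => (quadForm_mulVec_of_mem_isometryGroup hV x).trans hx
  refine Set.InvOn.bijOn (f' := (((U⁻¹ : (Matrix ι ι R)ˣ) : Matrix ι ι R) *ᵥ ·)) ⟨?_, ?_⟩
    (mapsTo hU) (mapsTo (inv_mem hU))
  · intro x _
    simp only [mulVec_mulVec, Units.inv_mul, one_mulVec]
  · intro x _
    simp only [mulVec_mulVec, Units.mul_inv, one_mulVec]

theorem coxeter_transpose_mul_mul_coxeter [CommRing R] {C : Matrix ι ι R} (hC : IsUnit C.det)
    {ε : R} (hε : ε * ε = 1) :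
    (ε • (Cᵀ * C⁻¹))ᵀ * (C⁻¹)ᵀ * (ε • (Cᵀ * C⁻¹)) = (C⁻¹)ᵀ := by
  have hinv : C * C⁻¹ = 1 := mul_nonsing_inv C hC
  have hinvT : (C⁻¹)ᵀ * Cᵀ = 1 := by rw [← transpose_mul, hinv, transpose_one]
  rw [transpose_smul, transpose_mul, transpose_transpose]
  simp only [smul_mul_assoc, mul_smul_comm, smul_smul, hε, one_smul]
  calc (C⁻¹)ᵀ * C * (C⁻¹)ᵀ * (Cᵀ * C⁻¹)
      = (C⁻¹)ᵀ * (C * (((C⁻¹)ᵀ * Cᵀ) * C⁻¹)) := by simp only [Matrix.mul_assoc]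
    _ = (C⁻¹)ᵀ := by rw [hinvT, Matrix.one_mul, hinv, Matrix.mul_one]

end Matrix

/-- The Euler quadratic form is invariant under all integer powers of the Coxeter
transformation; in particular Φ maps roots bijectively onto roots. -/
theorem stmt_2 (l n : ℕ) (C : Matrix (Fin l) (Fin l) ℚ) (hC : IsUnit C.det)
    (Φu : (Matrix (Fin l) (Fin l) ℚ)ˣ)
    (hΦ : (Φu : Matrix (Fin l) (Fin l) ℚ) = (-1 : ℚ) ^ n • (C.transpose * C⁻¹)) :
    (∀ (m : ℤ) (x : Fin l → ℚ),
        (((Φu ^ m : (Matrix (Fin l) (Fin l) ℚ)ˣ) : Matrix (Fin l) (Fin l) ℚ).mulVec x) ⬝ᵥ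
            ((C⁻¹).transpose.mulVec
              (((Φu ^ m : (Matrix (Fin l) (Fin l) ℚ)ˣ) : Matrix (Fin l) (Fin l) ℚ).mulVec x)) =
          x ⬝ᵥ ((C⁻¹).transpose.mulVec x)) ∧
      Set.BijOn (fun x => ((Φu : Matrix (Fin l) (Fin l) ℚ)).mulVec x)
        {x : Fin l → ℚ | x ⬝ᵥ ((C⁻¹).transpose.mulVec x) = 1}
        {x : Fin l → ℚ | x ⬝ᵥ ((C⁻¹).transpose.mulVec x) = 1} := by
  have hsign : (-1 : ℚ) ^ n * (-1) ^ n = 1 := by rw [← mul_pow]; norm_num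
  have hΦ_mem : Φu ∈ isometryGroup (C⁻¹)ᵀ := by
    rw [mem_isometryGroup, hΦ]
    exact coxeter_transpose_mul_mul_coxeter hC hsign
  exact ⟨fun m => quadForm_mulVec_of_mem_isometryGroup (zpow_mem hΦ_mem m),
    bijOn_quadForm_levelSet_of_mem_isometryGroup hΦ_mem 1⟩
end

section
/- Let t_1, …, t_l be ℤ-linear bijections of ℤ^l such that for each j and each index p ≠ j, (t_j(y))_p = y_p for all y (each t_j changes at most the j-th coordinate). Set Φ := t_l ∘ ⋯ ∘ t_1, an invertible map. Then for x ∈ ℤ^l the following are equivalent: (1) Φ^m(x) has all coordinates ≥ 0 for every m ∈ ℤ; (2) for every m ∈ ℤ and every 0 ≤ i ≤ l, the vector t_i ∘ t_{i−1} ∘ ⋯ ∘ t_1 ∘ Φ^m (x) has all coordinates ≥ 0. -/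
/-- The composition t_i ∘ ⋯ ∘ t_1 of the first `i` reflection transformations. -/
def partialComp (l : ℕ) (t : Fin l → ((Fin l → ℤ) ≃ₗ[ℤ] (Fin l → ℤ))) :
    ℕ → ((Fin l → ℤ) ≃ₗ[ℤ] (Fin l → ℤ))
  | 0 => 1
  | i + 1 => if h : i < l then t ⟨i, h⟩ * partialComp l t i else partialComp l t i

/-- A vector is Φ-positive for Φ = t_l ⋯ t_1 iff all partial compositions
t_i ⋯ t_1 Φ^m of it are nonnegative. -/
theorem stmt_9 (l : ℕ) (t : Fin l → ((Fin l → ℤ) ≃ₗ[ℤ] (Fin l → ℤ)))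
    (hcoord : ∀ (j : Fin l) (y : Fin l → ℤ) (p : Fin l), p ≠ j → t j y p = y p)
    (x : Fin l → ℤ) :
    (∀ (m : ℤ) (p : Fin l), 0 ≤ ((partialComp l t l) ^ m) x p) ↔
      (∀ (m : ℤ) (i : ℕ), i ≤ l →
        ∀ p : Fin l, 0 ≤ (partialComp l t i * (partialComp l t l) ^ m) x p) := by
  have pc_high : ∀ (i : ℕ) (y : Fin l → ℤ) (p : Fin l), i ≤ p.val →
      partialComp l t i y p = y p := by
    intro i
    induction i with
    | zero => intro y p _; rfl
    | succ i ih =>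
      intro y p hp
      by_cases h : i < l
      · have : partialComp l t (i + 1) y p = t ⟨i, h⟩ (partialComp l t i y) p := by
          simp only [partialComp, h, dif_pos]; rfl
        rw [this, hcoord _ _ p (by
          intro he
          have : p.val = i := by rw [he]
          omega), ih y p (by omega)]
      · have : partialComp l t (i + 1) y p = partialComp l t i y p := by
          simp [partialComp, h]
        rw [this, ih y p (by omega)]
  have pc_stable : ∀ (k i : ℕ), i ≤ k → ∀ (y : Fin l → ℤ) (p : Fin l), p.val < i →
      partialComp l t k y p = partialComp l t i y p := by
    intro k
    induction k with
    | zero =>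
      intro i hi y p _
      obtain rfl : i = 0 := Nat.le_zero.mp hi
      rfl
    | succ k ih =>
      intro i hi y p hp
      rcases Nat.eq_or_lt_of_le hi with he | hlt
      · rw [he]
      · have hik : i ≤ k := by omega
        by_cases h : k < l
        · have : partialComp l t (k + 1) y p = t ⟨k, h⟩ (partialComp l t k y) p := by
            simp only [partialComp, h, dif_pos]; rfl
          rw [this, hcoord _ _ p (by
            intro he2
            have : p.val = k := by rw [he2]
            omega), ih i hik y p hp]
        · have : partialComp l t (k + 1) y p = partialComp l t k y p := by
            simp [partialComp, h]
          rw [this, ih i hik y p hp]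
  constructor
  · intro h m i hi p
    have hmul : (partialComp l t i * (partialComp l t l) ^ m) x p
        = partialComp l t i (((partialComp l t l) ^ m) x) p := rfl
    rw [hmul]
    by_cases hp : p.val < i
    · rw [← pc_stable l i hi _ p hp]
      have : partialComp l t l (((partialComp l t l) ^ m) x)
          = ((partialComp l t l) ^ (1 + m)) x := by
        rw [zpow_add, zpow_one]
        rfl
      rw [this]
      exact h (1 + m) p
    · rw [pc_high i _ p (by omega)]
      exact h m p
  · intro h m p
    have := h m 0 (Nat.zero_le l) p
    simpa [partialComp] using this
end

section
/- Let t_1, …, t_l be ℤ-linear bijections of ℤ^l such that for each j, t_j changes at most the j-th coordinate of every vector. Set Φ := t_l ∘ ⋯ ∘ t_1 and Φ' := t_1 ∘ t_l ∘ ⋯ ∘ t_2 (= t_1 ∘ Φ ∘ t_1⁻¹). Then a vector x ∈ ℤ^l is Φ-positive (i.e. Φ^m(x) ∈ ℤ^l_{≥0} for all m ∈ ℤ) if and only if t_1(x) is Φ'-positive. Consequently x ↦ t_1(x) gives a bijection between Φ-positive vectors and Φ'-positive vectors. -/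
/-- x is Φ-positive iff t_1(x) is Φ'-positive, where Φ = t_l⋯t_1 and
Φ' = t_1 t_l ⋯ t_2 = t_1 Φ t_1⁻¹; in particular t_1 gives a bijection between
Φ-positive vectors and Φ'-positive vectors. -/
theorem stmt_10 (l : ℕ) (hl : 0 < l) (t : Fin l → ((Fin l → ℤ) ≃ₗ[ℤ] (Fin l → ℤ)))
    (hcoord : ∀ (j : Fin l) (y : Fin l → ℤ) (p : Fin l), p ≠ j → t j y p = y p) :
    (∀ x : Fin l → ℤ,
      (∀ (m : ℤ) (p : Fin l), 0 ≤ ((partialComp l t l) ^ m) x p) ↔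
        (∀ (m : ℤ) (p : Fin l),
          0 ≤ ((t ⟨0, hl⟩ * partialComp l t l * (t ⟨0, hl⟩)⁻¹) ^ m) (t ⟨0, hl⟩ x) p)) ∧
      Set.BijOn (⇑(t ⟨0, hl⟩))
        {x : Fin l → ℤ | ∀ (m : ℤ) (p : Fin l), 0 ≤ ((partialComp l t l) ^ m) x p}
        {y : Fin l → ℤ | ∀ (m : ℤ) (p : Fin l),
          0 ≤ ((t ⟨0, hl⟩ * partialComp l t l * (t ⟨0, hl⟩)⁻¹) ^ m) y p} := by
  set e := t ⟨0, hl⟩ with he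
  set Φ := partialComp l t l with hΦ
  -- coordinate 0 of partialComp i y agrees with that of e y, for i ≥ 1
  have key : ∀ i, 1 ≤ i → ∀ y, (partialComp l t i) y ⟨0, hl⟩ = e y ⟨0, hl⟩ := by
    intro i hi
    induction i with
    | zero => omega
    | succ i ih =>
      intro y
      rcases Nat.eq_zero_or_pos i with h0 | h1
      · subst h0
        simp [partialComp, hl, he]
      · rw [show partialComp l t (i + 1)
            = if h : i < l then t ⟨i, h⟩ * partialComp l t i else partialComp l t i from rfl]
        split_ifs with h
        · have hne : (⟨0, hl⟩ : Fin l) ≠ ⟨i, h⟩ := by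
            simp [Fin.ext_iff]; omega
          have : (t ⟨i, h⟩ * partialComp l t i) y
              = t ⟨i, h⟩ ((partialComp l t i) y) := rfl
          rw [this, hcoord _ _ _ hne]
          exact ih h1 y
        · exact ih h1 y
  have key0 : ∀ y, Φ y ⟨0, hl⟩ = e y ⟨0, hl⟩ := key l hl
  have conj : ∀ (m : ℤ) (y : Fin l → ℤ),
      ((e * Φ * e⁻¹) ^ m) (e y) = e ((Φ ^ m) y) := by
    intro m y
    rw [conj_zpow]
    show e ((Φ ^ m) (e⁻¹ (e y))) = _
    congr 1
    congr 1
    exact e.symm_apply_apply y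
  have step : ∀ (m : ℤ) (x : Fin l → ℤ),
      (Φ ^ (m + 1)) x ⟨0, hl⟩ = e ((Φ ^ m) x) ⟨0, hl⟩ := by
    intro m x
    rw [add_comm, zpow_add, zpow_one]
    show Φ ((Φ ^ m) x) ⟨0, hl⟩ = _
    exact key0 _
  have main : ∀ x : Fin l → ℤ,
      (∀ (m : ℤ) (p : Fin l), 0 ≤ (Φ ^ m) x p) ↔
        (∀ (m : ℤ) (p : Fin l), 0 ≤ ((e * Φ * e⁻¹) ^ m) (e x) p) := by
    intro x
    constructor
    · intro h m p
      rw [conj]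
      by_cases hp : p = ⟨0, hl⟩
      · subst hp
        rw [← step m x]
        exact h (m + 1) _
      · rw [hcoord _ _ _ hp]
        exact h m p
    · intro h m p
      by_cases hp : p = ⟨0, hl⟩
      · subst hp
        have := h (m - 1) ⟨0, hl⟩
        rw [conj] at this
        rw [show m = m - 1 + 1 by ring, step]
        exact this
      · have := h m p
        rw [conj, hcoord _ _ _ hp] at this
        exact this
  refine ⟨main, ?_, fun a _ b _ hab => e.injective hab, fun y hy => ⟨e⁻¹ y, ?_, ?_⟩⟩
  · intro x hx
    exact (main x).1 hx
  · show ∀ (m : ℤ) (p : Fin l), 0 ≤ (Φ ^ m) (e⁻¹ y) p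
    have hy' : ∀ (m : ℤ) (p : Fin l), 0 ≤ ((e * Φ * e⁻¹) ^ m) (e (e⁻¹ y)) p := by
      have : e (e⁻¹ y) = y := e.apply_symm_apply y
      rw [this]; exact hy
    exact (main (e⁻¹ y)).2 hy'
  · exact e.apply_symm_apply y
end

section
/- Let Q_0 = {1,…,l} be a vertex set, A and R finite multisets of ordered pairs in Q_0 × Q_0 (arrows and relations), and define the Tits form q(x) := Σ_{i=1}^l x_i² − Σ_{(i,j)∈A} x_i x_j + Σ_{(i,j)∈R} x_i x_j. Fix a vertex k such that every pair in A ∪ R involving k has k as its second component (k is a sink). Define the mutated data: A' := {(i,j) ∈ A : j ≠ k} ∪ {(k,i) : (i,k) ∈ R} and R' := {(i,j) ∈ R : j ≠ k} ∪ {(k,i) : (i,k) ∈ A}, with Tits form q'. Then q'(x) = q(δ_k x) for all x ∈ ℤ^l, where δ_k negates the k-th coordinate of x and fixes the others. -/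
/-- The Tits form of a quiver with relations, given by multisets of arrows `A`
and relations `R` (each recorded as the pair (start, end)). -/
def titsForm {l : ℕ} (A R : Multiset (Fin l × Fin l)) (x : Fin l → ℤ) : ℤ :=
  (∑ i, x i ^ 2) - (A.map fun p => x p.1 * x p.2).sum + (R.map fun p => x p.1 * x p.2).sum

lemma sink_sum {l : ℕ} (S : Multiset (Fin l × Fin l)) (k : Fin l)
    (hs : ∀ p ∈ S, p.1 ≠ k) (x : Fin l → ℤ) :
    (S.map fun p => Function.update x k (-(x k)) p.1 * Function.update x k (-(x k)) p.2).sum =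
      ((S.filter (fun p => p.2 ≠ k)).map fun p => x p.1 * x p.2).sum -
      ((S.filter (fun p => p.2 = k)).map fun p => x p.1 * x k).sum := by
  induction S using Multiset.induction with
  | empty => simp
  | cons a s ih =>
    obtain ⟨a1, a2⟩ := a
    have ha : a1 ≠ k := hs (a1, a2) (Multiset.mem_cons_self _ s)
    have ih' := ih (fun p hp => hs p (Multiset.mem_cons_of_mem hp))
    by_cases h2 : a2 = k
    · subst h2
      simp [Multiset.filter_cons, ih', Function.update_of_ne ha, Function.update_self]
      ring
    · simp [Multiset.filter_cons, h2, ih', Function.update_of_ne ha, Function.update_of_ne h2]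
      ring

/-- Mutating a quiver with relations at a sink k (2-APR tilt) transforms the Tits
form by q'(x) = q(δ_k x). -/
theorem stmt_12 (l : ℕ) (A R : Multiset (Fin l × Fin l)) (k : Fin l)
    (hsink : ∀ p ∈ A + R, p.1 ≠ k) (x : Fin l → ℤ) :
    titsForm
        (A.filter (fun p => p.2 ≠ k) + (R.filter (fun p => p.2 = k)).map fun p => (k, p.1))
        (R.filter (fun p => p.2 ≠ k) + (A.filter (fun p => p.2 = k)).map fun p => (k, p.1))
        x =
      titsForm A R (Function.update x k (-(x k))) := by
  have hA : ∀ p ∈ A, p.1 ≠ k := fun p hp => hsink p (Multiset.mem_add.2 (Or.inl hp))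
  have hR : ∀ p ∈ R, p.1 ≠ k := fun p hp => hsink p (Multiset.mem_add.2 (Or.inr hp))
  have hsq : (∑ i, Function.update x k (-(x k)) i ^ 2) = ∑ i, x i ^ 2 := by
    refine Finset.sum_congr rfl fun i _ => ?_
    by_cases hi : i = k
    · subst hi; simp [Function.update_self]
    · simp [Function.update_of_ne hi]
  have hmapA : (((A.filter (fun p => p.2 = k)).map fun p => (k, p.1)).map
      fun p => x p.1 * x p.2).sum = ((A.filter (fun p => p.2 = k)).map fun p => x p.1 * x k).sum := by
    rw [Multiset.map_map]; congr 1; ext p; simp [mul_comm]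
  have hmapR : (((R.filter (fun p => p.2 = k)).map fun p => (k, p.1)).map
      fun p => x p.1 * x p.2).sum = ((R.filter (fun p => p.2 = k)).map fun p => x p.1 * x k).sum := by
    rw [Multiset.map_map]; congr 1; ext p; simp [mul_comm]
  simp only [titsForm, Multiset.map_add, Multiset.sum_add, hsq, hmapA, hmapR,
    sink_sum A k hA x, sink_sum R k hR x]
  ring
end
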